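/- Let (K, v) be a henselian valued field, let n ∈ ℕ with n ≥ 2, and let ε ∈ K× be such that v(ε) is not n-divisible in vK and v(ε)/n is a left-sided limit point of vK, i.e. for every c ∈ vK with c > 0 there exists g ∈ vK with v(ε) − c < n·g < v(ε). Define Ψ_ε = {ε·x^n : x ∈ K, v(ε·x^n) > 0} and Ω_ε = {x^n − x^(n−1) : x ∈ K and there exist y ∈ K and z ∈ Ψ_ε with z·(y^n − y^(n−1)) = x^n − x^(n−1)}. Then Ω_ε = 𝓜_v, the maximal ideal of the valuation ring of v. -/

import Mathlib

/-!
Write `Φ x = x ^ n - x ^ (n - 1) = x ^ (n - 1) * (x - 1)`. Since `1` is a simple root of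
`X ^ n - X ^ (n - 1)`, Hensel's lemma shows that `Φ` maps `K` onto `𝓜_v`.

If `v x < 0` then `v (Φ x) = n • v x`, and otherwise `v (Φ x) ≥ 0`; so every value `v (Φ x) ≤ 0`
is `n`-divisible. For `z ∈ Ψ_ε` and `Φ y` of value `≤ 0`, `v (z * Φ y) = v ε + n • (…)` is not,
hence `Ω_ε ⊆ 𝓜_v`. Conversely, for `w ∈ 𝓜_v` the limit point hypothesis provides `z ∈ Ψ_ε` with
`0 < v z < v w`; then `w / z ∈ 𝓜_v`, so both `w` and `w / z` are values of `Φ`.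
-/

open Polynomial

section ValuationPrelude

variable {K : Type*} [Field K] {G : Type*} [AddCommGroup G] [LinearOrder G] [IsOrderedAddMonoid G]

/-- `v : K → G ∪ {∞}` is a (surjective) valuation on the field `K` with value group `G`. -/
def IsValuation (v : K → WithTop G) : Prop :=
  (∀ x, v x = ⊤ ↔ x = 0) ∧
  (∀ x y, v (x * y) = v x + v y) ∧
  (∀ x y, min (v x) (v y) ≤ v (x + y)) ∧
  (∀ g : G, ∃ x, v x = (g : WithTop G))

/-- Hensel's Lemma holds for `(K, v)` for all polynomials of degree at most `n`. -/
def DegLEHenselian (v : K → WithTop G) (n : ℕ) : Prop :=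
  ∀ f : Polynomial K, f.natDegree ≤ n → (∀ i, (0 : WithTop G) ≤ v (f.coeff i)) →
    ∀ a : K, (0 : WithTop G) ≤ v a →
      (0 : WithTop G) < v (f.eval a) →
      ¬ (0 : WithTop G) < v (f.derivative.eval a) →
      ∃ b : K, (0 : WithTop G) ≤ v b ∧ f.eval b = 0 ∧ (0 : WithTop G) < v (b - a)

/-- `(K, v)` is henselian: Hensel's Lemma holds for all polynomials. -/
def IsHenselianValuation (v : K → WithTop G) : Prop :=
  ∀ n : ℕ, DegLEHenselian v n

end ValuationPrelude

section HenselianValuation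

variable {K : Type*} [Field K] {G : Type*} [AddCommGroup G] [LinearOrder G] [IsOrderedAddMonoid G]

namespace IsValuation

variable {v : K → WithTop G}

lemma map_one (hv : IsValuation v) : v 1 = 0 := by
  obtain ⟨g, hg⟩ := WithTop.ne_top_iff_exists.mp
    (fun h => one_ne_zero ((hv.1 1).mp h) : v 1 ≠ ⊤)
  have h := hv.2.1 1 1
  rw [one_mul, ← hg, ← WithTop.coe_add, WithTop.coe_inj, left_eq_add] at h
  rw [← hg, h, WithTop.coe_zero]

def toAddValuation (hv : IsValuation v) : AddValuation K (WithTop G) :=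
  AddValuation.of v ((hv.1 0).mpr rfl) hv.map_one hv.2.2.1 hv.2.1

end IsValuation

namespace AddValuation

variable (V : AddValuation K (WithTop G)) {n : ℕ}

lemma exists_nsmul_eq_of_pow_sub_pow_pred_nonpos (hn : 1 ≤ n) {x : K}
    (hx : V (x ^ n - x ^ (n - 1)) ≤ 0) : ∃ a : G, V (x ^ n - x ^ (n - 1)) = ↑(n • a) := by
  obtain ⟨m, rfl⟩ : ∃ m, n = m + 1 := ⟨n - 1, by omega⟩
  have hfac : x ^ (m + 1) - x ^ (m + 1 - 1) = x ^ m * (x - 1) := by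
    rw [Nat.add_sub_cancel]; ring
  rw [hfac, V.map_mul, V.map_pow] at hx ⊢
  rcases le_or_gt 0 (V x) with hx0 | hxneg
  · have hsub : 0 ≤ V (x - 1) := V.map_le_sub hx0 (by rw [V.map_one])
    refine ⟨0, le_antisymm (by simpa using hx) ?_⟩
    simpa using add_nonneg (nsmul_nonneg hx0 m) hsub
  · obtain ⟨g, hg⟩ := WithTop.ne_top_iff_exists.mp (hxneg.trans (WithTop.coe_lt_top 0)).ne
    have hsub : V (x - 1) = V x := V.map_sub_eq_of_lt_left (by rwa [V.map_one])
    exact ⟨g, by rw [hsub, ← hg, WithTop.coe_nsmul, succ_nsmul]⟩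

lemma exists_pow_sub_pow_pred_eq (hhens : DegLEHenselian V n) (hn : 1 ≤ n) {w : K}
    (hw : 0 < V w) : ∃ x : K, x ^ n - x ^ (n - 1) = w := by
  set f : K[X] := X ^ n - X ^ (n - 1) - C w
  have hdeg : f.natDegree ≤ n := by
    refine (natDegree_sub_le _ _).trans (max_le ((natDegree_sub_le _ _).trans ?_) (by simp))
    simp only [natDegree_X_pow]
    omega
  have hcoeff : ∀ i, 0 ≤ V (f.coeff i) := by
    intro i
    simp only [f, coeff_sub, coeff_X_pow, coeff_C]
    refine V.map_le_sub (V.map_le_sub ?_ ?_) ?_ <;> split_ifs <;> simp [hw.le]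
  have heval : f.eval 1 = -w := by simp [f]
  have hderiv : f.derivative.eval 1 = 1 := by
    simp only [f, derivative_sub, derivative_C, derivative_X_pow, sub_zero, eval_sub, eval_mul,
      eval_C, eval_pow, eval_X, one_pow, mul_one, Nat.cast_sub hn]
    ring
  obtain ⟨x, -, hx, -⟩ := hhens f hdeg hcoeff 1 (by simp) (by rwa [heval, V.map_neg])
    (by simp [hderiv])
  exact ⟨x, sub_eq_zero.mp (by simpa [f] using hx)⟩

lemma pos_of_mul_pow_sub_pow_pred_eq {ε : K} {e : G} (he : V ε = e)
    (hnd : ¬ ∃ h : G, e = n • h) (hn : 1 ≤ n) {x y t : K} (hz : 0 < V (ε * t ^ n))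
    (hxy : ε * t ^ n * (y ^ n - y ^ (n - 1)) = x ^ n - x ^ (n - 1)) :
    0 < V (x ^ n - x ^ (n - 1)) := by
  by_contra! hx
  obtain ⟨a, ha⟩ := V.exists_nsmul_eq_of_pow_sub_pow_pred_nonpos hn hx
  have hy : V (y ^ n - y ^ (n - 1)) ≤ 0 := by
    by_contra! hy
    rw [← hxy, V.map_mul] at hx
    exact hx.not_gt (hz.trans_le (le_add_of_nonneg_right hy.le))
  obtain ⟨b, hb⟩ := V.exists_nsmul_eq_of_pow_sub_pow_pred_nonpos hn hy
  have ht : t ≠ 0 := by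
    rintro rfl
    rw [zero_pow (by omega), mul_zero, zero_mul, eq_comm] at hxy
    rw [hxy, V.map_zero] at ha
    exact WithTop.top_ne_coe ha
  obtain ⟨c, hc⟩ := WithTop.ne_top_iff_exists.mp (V.top_iff.not.mpr ht)
  have key : (↑(n • a) : WithTop G) = ↑(e + n • c + n • b) := by
    rw [← ha, ← hxy, V.map_mul, V.map_mul, V.map_pow, he, hb, ← hc]
    push_cast
    rfl
  rw [WithTop.coe_inj] at key
  exact hnd ⟨a - c - b, by rw [nsmul_sub, nsmul_sub, key]; abel⟩

lemma exists_val_mul_pow_pos_lt (hsurj : ∀ g : G, ∃ t : K, V t = g) {ε : K} {e : G}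
    (he : V ε = e) (he0 : e ≠ 0) (hlim : ∀ c : G, 0 < c → ∃ g : G, e - c < n • g ∧ n • g < e)
    {d : WithTop G} (hd : 0 < d) : ∃ t : K, 0 < V (ε * t ^ n) ∧ V (ε * t ^ n) < d := by
  obtain ⟨c, hc, hcd⟩ : ∃ c : G, 0 < c ∧ (c : WithTop G) ≤ d := by
    cases d with
    | top => exact ⟨|e|, abs_pos.mpr he0, le_top⟩
    | coe c => exact ⟨c, WithTop.coe_pos.mp hd, le_rfl⟩
  obtain ⟨g, hgc, hge⟩ := hlim c hc
  obtain ⟨t, ht⟩ := hsurj (-g)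
  have hvz : V (ε * t ^ n) = ↑(e - n • g) := by
    rw [V.map_mul, V.map_pow, he, ht, sub_eq_add_neg, ← smul_neg]
    push_cast
    rfl
  refine ⟨t, ?_⟩
  rw [hvz]
  exact ⟨WithTop.coe_pos.mpr (sub_pos.mpr hge),
    (WithTop.coe_lt_coe.mpr (sub_lt_comm.mp hgc)).trans_le hcd⟩

end AddValuation

end HenselianValuation

theorem stmt2 {K : Type*} [Field K] {G : Type*} [AddCommGroup G] [LinearOrder G] [IsOrderedAddMonoid G]
    (v : K → WithTop G) (hval : IsValuation v) (hhens : IsHenselianValuation v)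
    (n : ℕ) (hn : 2 ≤ n) (ε : K) (e : G) (he : v ε = (e : WithTop G))
    (hnd : ¬ ∃ h : G, e = n • h)
    (hlim : ∀ c : G, 0 < c → ∃ g : G, e - c < n • g ∧ n • g < e) :
    {w : K | ∃ x : K, w = x ^ n - x ^ (n - 1) ∧
        ∃ y z : K,
          (∃ x' : K, z = ε * x' ^ n ∧ (0 : WithTop G) < v (ε * x' ^ n)) ∧
          z * (y ^ n - y ^ (n - 1)) = x ^ n - x ^ (n - 1)} =
      {w : K | (0 : WithTop G) < v w} := by
  obtain ⟨V, rfl⟩ : ∃ V : AddValuation K (WithTop G), ⇑V = v := ⟨hval.toAddValuation, rfl⟩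
  have hn1 : 1 ≤ n := by omega
  ext w
  constructor
  · rintro ⟨x, rfl, y, _, ⟨t, rfl, hz⟩, hxy⟩
    exact V.pos_of_mul_pow_sub_pow_pred_eq he hnd hn1 hz hxy
  · intro hw
    have he0 : e ≠ 0 := fun h => hnd ⟨0, by rw [h, smul_zero]⟩
    obtain ⟨x, hx⟩ := V.exists_pow_sub_pow_pred_eq (hhens n) hn1 hw
    obtain ⟨t, hz, hzw⟩ := V.exists_val_mul_pow_pos_lt hval.2.2.2 he he0 hlim hw
    have hz0 : ε * t ^ n ≠ 0 := V.top_iff.not.mp (hzw.trans_le le_top).ne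
    obtain ⟨y, hy⟩ := V.exists_pow_sub_pow_pred_eq (hhens n) hn1 (w := w / (ε * t ^ n))
      (by rw [V.map_div]; exact LinearOrderedAddCommGroupWithTop.sub_pos.mpr (Or.inl hzw))
    exact ⟨x, hx.symm, y, ε * t ^ n, ⟨t, rfl, hz⟩, by rw [hy, hx, mul_div_cancel₀ _ hz0]⟩
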